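/- Let P^target(b,c|x,z) (b, c, x, z ∈ {0,1}) be a bipartite Bell behavior (P^target ≥ 0 and ∑_{b,c} P^target(b,c|x,z) = 1 for all x, z) that is non-signaling from the second party to the first, i.e. ∑_c P^target(b,c|x,z) is independent of z. Then there exists a tripartite behavior P(a,b,c|x,y,z) (a,b,c,x,y,z ∈ {0,1}; nonnegative, summing to 1 over a,b,c for each x,y,z) that admits a local-hidden-variable (LHV) model across the bipartition AB|C and satisfies ∑_{a∈{0,1}} P(a,b,c|x,a,z) = P^target(b,c|x,z) for all b, c, x, z. -/

import Mathlib

open Matrix BigOperators ComplexOrder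

noncomputable section

/-- A tripartite behavior `P a b c x y z` admits an LHV model across the bipartition AB|C. -/
def IsLHV_ABC (P : Fin 2 → Fin 2 → Fin 2 → Fin 2 → Fin 2 → Fin 2 → ℝ) : Prop :=
  ∃ (n : ℕ) (w : Fin n → ℝ) (q : Fin n → Fin 2 → Fin 2 → Fin 2 → Fin 2 → ℝ)
    (r : Fin n → Fin 2 → Fin 2 → ℝ),
    (∀ l, 0 ≤ w l) ∧ (∑ l, w l = 1) ∧
    (∀ l a b x y, 0 ≤ q l a b x y) ∧ (∀ l x y, ∑ a, ∑ b, q l a b x y = 1) ∧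
    (∀ l c z, 0 ≤ r l c z) ∧ (∀ l z, ∑ c, r l c z = 1) ∧
    (∀ a b c x y z, P a b c x y z = ∑ l, w l * q l a b x y * r l c z)

variable (Pt : Fin 2 → Fin 2 → Fin 2 → Fin 2 → ℝ)

/-- marginal of B -/
def mP (b x : Fin 2) : ℝ := ∑ c, Pt b c x 0

/-- joint distribution of (b, c0, c1) given x, conditionally independent c0, c1 given b -/
def JP (b c0 c1 x : Fin 2) : ℝ :=
  if mP Pt b x = 0 then 0 else Pt b c0 x 0 * Pt b c1 x 1 / mP Pt b x

def nuP (c0 c1 x : Fin 2) : ℝ := ∑ b, JP Pt b c0 c1 x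

abbrev T := Fin 2 × Fin 2 × Fin 2

def WP (t : T) : ℝ := nuP Pt t.2.1 t.2.2 t.1 / 2

def QP (t : T) (a b x y : Fin 2) : ℝ :=
  if x = t.1 ∧ nuP Pt t.2.1 t.2.2 t.1 ≠ 0 then
    (if a = y then JP Pt b t.2.1 t.2.2 t.1 / nuP Pt t.2.1 t.2.2 t.1 else 0)
  else (if a = y then 0 else 1/2)

def RP (t : T) (c z : Fin 2) : ℝ := if c = (if z = 0 then t.2.1 else t.2.2) then 1 else 0

/-- Every bipartite Bell behavior that is non-signaling from the second party to the
first can be obtained from a tripartite behavior admitting an LHV model across AB|C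
via the wiring `y = a`. -/
theorem universal_bell_exposure
    (Pt : Fin 2 → Fin 2 → Fin 2 → Fin 2 → ℝ)
    (hpos : ∀ b c x z, 0 ≤ Pt b c x z)
    (hnorm : ∀ x z, ∑ b, ∑ c, Pt b c x z = 1)
    (hns : ∀ b x z z', ∑ c, Pt b c x z = ∑ c, Pt b c x z') :
    ∃ P : Fin 2 → Fin 2 → Fin 2 → Fin 2 → Fin 2 → Fin 2 → ℝ,
      (∀ a b c x y z, 0 ≤ P a b c x y z) ∧
      (∀ x y z, ∑ a, ∑ b, ∑ c, P a b c x y z = 1) ∧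
      IsLHV_ABC P ∧
      (∀ b c x z, ∑ a, P a b c x a z = Pt b c x z) := by
  -- basic facts about mP, JP, nuP
  have hm_nonneg : ∀ b x, 0 ≤ mP Pt b x := by
    intro b x
    exact Finset.sum_nonneg fun c _ => hpos b c x 0
  have hm0 : ∀ b x, mP Pt b x = 0 → ∀ c z, Pt b c x z = 0 := by
    intro b x hm c z
    have h1 : ∑ c, Pt b c x z = 0 := by
      rw [hns b x z 0]; exact hm
    have := (Finset.sum_eq_zero_iff_of_nonneg (fun c _ => hpos b c x z)).mp h1
    exact this c (Finset.mem_univ c)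
  have hJ_nonneg : ∀ b c0 c1 x, 0 ≤ JP Pt b c0 c1 x := by
    intro b c0 c1 x
    unfold JP
    split_ifs with h
    · exact le_rfl
    · exact div_nonneg (mul_nonneg (hpos _ _ _ _) (hpos _ _ _ _)) (hm_nonneg b x)
  have hsum_c1 : ∀ b c0 x, ∑ c1, JP Pt b c0 c1 x = Pt b c0 x 0 := by
    intro b c0 x
    by_cases hm : mP Pt b x = 0
    · simp [JP, hm, hm0 b x hm c0 0]
    · simp only [JP, if_neg hm]
      rw [← Finset.sum_div, ← Finset.mul_sum]
      have h1 : ∑ c1, Pt b c1 x 1 = mP Pt b x := hns b x 1 0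
      rw [h1, mul_div_assoc, div_self hm, mul_one]
  have hsum_c0 : ∀ b c1 x, ∑ c0, JP Pt b c0 c1 x = Pt b c1 x 1 := by
    intro b c1 x
    by_cases hm : mP Pt b x = 0
    · simp [JP, hm, hm0 b x hm c1 1]
    · simp only [JP, if_neg hm]
      rw [← Finset.sum_div, ← Finset.sum_mul]
      have h1 : ∑ c0, Pt b c0 x 0 = mP Pt b x := rfl
      rw [h1, mul_comm, mul_div_assoc, div_self hm, mul_one]
  have hnu_nonneg : ∀ c0 c1 x, 0 ≤ nuP Pt c0 c1 x := by
    intro c0 c1 x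
    exact Finset.sum_nonneg fun b _ => hJ_nonneg b c0 c1 x
  have hnu0 : ∀ c0 c1 x, nuP Pt c0 c1 x = 0 → ∀ b, JP Pt b c0 c1 x = 0 := by
    intro c0 c1 x hnu b
    have := (Finset.sum_eq_zero_iff_of_nonneg (fun b _ => hJ_nonneg b c0 c1 x)).mp hnu
    exact this b (Finset.mem_univ b)
  have hsumJ : ∀ c0 c1 x, ∑ b, JP Pt b c0 c1 x = nuP Pt c0 c1 x := fun _ _ _ => rfl
  have hsumnu : ∀ x, ∑ c0, ∑ c1, nuP Pt c0 c1 x = 1 := by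
    intro x
    calc ∑ c0, ∑ c1, nuP Pt c0 c1 x
        = ∑ c0, ∑ c1, ∑ b, JP Pt b c0 c1 x := rfl
      _ = ∑ c0, ∑ b, ∑ c1, JP Pt b c0 c1 x :=
          Finset.sum_congr rfl fun c0 _ => Finset.sum_comm
      _ = ∑ c0, ∑ b, Pt b c0 x 0 :=
          Finset.sum_congr rfl fun c0 _ => Finset.sum_congr rfl fun b _ => hsum_c1 b c0 x
      _ = ∑ b, ∑ c0, Pt b c0 x 0 := Finset.sum_comm
      _ = 1 := hnorm x 0
  -- properties of W, Q, R
  have hW_nonneg : ∀ t : T, 0 ≤ WP Pt t := by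
    intro t
    exact div_nonneg (hnu_nonneg _ _ _) (by norm_num)
  have hW_sum : ∑ t : T, WP Pt t = 1 := by
    rw [Fintype.sum_prod_type]
    have : ∀ x : Fin 2, ∑ p : Fin 2 × Fin 2, WP Pt (x, p) = 1 / 2 := by
      intro x
      rw [Fintype.sum_prod_type]
      simp only [WP]
      simp only [← Finset.sum_div]
      rw [hsumnu x]
    · rw [Fin.sum_univ_two, this 0, this 1]; norm_num
  have hQ_nonneg : ∀ (t : T) a b x y, 0 ≤ QP Pt t a b x y := by
    intro t a b x y
    unfold QP
    split_ifs <;>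
      first
        | exact div_nonneg (hJ_nonneg _ _ _ _) (hnu_nonneg _ _ _)
        | norm_num
  have hQ_sum : ∀ (t : T) x y, ∑ a, ∑ b, QP Pt t a b x y = 1 := by
    intro t x y
    by_cases h : x = t.1 ∧ nuP Pt t.2.1 t.2.2 t.1 ≠ 0
    · simp only [QP, if_pos h]
      have hnu := h.2
      have hJsum : JP Pt 0 t.2.1 t.2.2 t.1 + JP Pt 1 t.2.1 t.2.2 t.1 = nuP Pt t.2.1 t.2.2 t.1 := by
        rw [← Fin.sum_univ_two (fun b => JP Pt b t.2.1 t.2.2 t.1)]; rfl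
      fin_cases y <;>
        · simp [Fin.sum_univ_two]
          rw [← add_div, hJsum, div_self hnu]
    · simp only [QP, if_neg h]
      fin_cases y <;> norm_num [Fin.sum_univ_two]
  have hR_nonneg : ∀ (t : T) c z, 0 ≤ RP t c z := by
    intro t c z
    unfold RP
    split_ifs <;> norm_num
  have hR_sum : ∀ (t : T) z, ∑ c, RP t c z = 1 := by
    intro t z
    have key : ∀ d : Fin 2, ∑ c : Fin 2, (if c = d then (1:ℝ) else 0) = 1 := by
      intro d; fin_cases d <;> simp [Fin.sum_univ_two]
    exact key _
  -- define P
  refine ⟨fun a b c x y z => ∑ t : T, WP Pt t * QP Pt t a b x y * RP t c z, ?_, ?_, ?_, ?_⟩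
  · intro a b c x y z
    exact Finset.sum_nonneg fun t _ =>
      mul_nonneg (mul_nonneg (hW_nonneg t) (hQ_nonneg t a b x y)) (hR_nonneg t c z)
  · intro x y z
    have key : ∀ t : T, ∑ a : Fin 2, ∑ b : Fin 2, ∑ c : Fin 2,
        WP Pt t * QP Pt t a b x y * RP t c z = WP Pt t := by
      intro t
      have h1 : ∀ a b : Fin 2, ∑ c : Fin 2, WP Pt t * QP Pt t a b x y * RP t c z
          = WP Pt t * QP Pt t a b x y := by
        intro a b
        rw [← Finset.mul_sum, hR_sum t z, mul_one]
      calc ∑ a : Fin 2, ∑ b : Fin 2, ∑ c : Fin 2, WP Pt t * QP Pt t a b x y * RP t c z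
          = ∑ a : Fin 2, ∑ b : Fin 2, WP Pt t * QP Pt t a b x y := by
            exact Finset.sum_congr rfl fun a _ => Finset.sum_congr rfl fun b _ => h1 a b
        _ = WP Pt t * ∑ a : Fin 2, ∑ b : Fin 2, QP Pt t a b x y := by
            simp only [Finset.mul_sum]
        _ = WP Pt t := by rw [hQ_sum t x y, mul_one]
    calc ∑ a, ∑ b, ∑ c, ∑ t : T, WP Pt t * QP Pt t a b x y * RP t c z
        = ∑ a, ∑ b, ∑ t : T, ∑ c, WP Pt t * QP Pt t a b x y * RP t c z :=
          Finset.sum_congr rfl fun a _ => Finset.sum_congr rfl fun b _ => Finset.sum_comm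
      _ = ∑ a, ∑ t : T, ∑ b, ∑ c, WP Pt t * QP Pt t a b x y * RP t c z :=
          Finset.sum_congr rfl fun a _ => Finset.sum_comm
      _ = ∑ t : T, ∑ a, ∑ b, ∑ c, WP Pt t * QP Pt t a b x y * RP t c z :=
          Finset.sum_comm
      _ = ∑ t : T, WP Pt t := Finset.sum_congr rfl fun t _ => key t
      _ = 1 := hW_sum
  · -- LHV structure
    have e : Fin 8 ≃ T := Fintype.equivOfCardEq (by simp)
    refine ⟨8, fun l => WP Pt (e l), fun l => QP Pt (e l), fun l => RP (e l),
      fun l => hW_nonneg _, ?_, fun l a b x y => hQ_nonneg _ _ _ _ _,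
      fun l x y => hQ_sum _ _ _, fun l c z => hR_nonneg _ _ _, fun l z => hR_sum _ _,
      fun a b c x y z => ?_⟩
    · rw [Equiv.sum_comp e (WP Pt)]; exact hW_sum
    · exact (Equiv.sum_comp e (fun t => WP Pt t * QP Pt t a b x y * RP t c z)).symm
  · -- wiring
    intro b c x z
    have hsum_c1' : ∀ b c0 x, JP Pt b c0 0 x + JP Pt b c0 1 x = Pt b c0 x 0 := by
      intro b c0 x; rw [← hsum_c1 b c0 x, Fin.sum_univ_two]
    have hsum_c0' : ∀ b c1 x, JP Pt b 0 c1 x + JP Pt b 1 c1 x = Pt b c1 x 1 := by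
      intro b c1 x; rw [← hsum_c0 b c1 x, Fin.sum_univ_two]
    have hQa : ∀ t : T, ∑ a : Fin 2, QP Pt t a b x a =
        if x = t.1 ∧ nuP Pt t.2.1 t.2.2 t.1 ≠ 0 then
          2 * (JP Pt b t.2.1 t.2.2 t.1 / nuP Pt t.2.1 t.2.2 t.1) else 0 := by
      intro t
      by_cases h : x = t.1 ∧ nuP Pt t.2.1 t.2.2 t.1 ≠ 0
      · simp [QP, h, Fin.sum_univ_two]
        try ring
      · simp [QP, h, Fin.sum_univ_two]
    have key : ∀ t : T, WP Pt t * (∑ a : Fin 2, QP Pt t a b x a) * RP t c z =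
        (if x = t.1 then JP Pt b t.2.1 t.2.2 t.1 else 0) * RP t c z := by
      intro t
      rw [hQa t]
      by_cases h1 : x = t.1
      · by_cases h2 : nuP Pt t.2.1 t.2.2 t.1 = 0
        · simp [h1, h2, hnu0 _ _ _ h2 b]
        · simp only [if_pos (And.intro h1 h2), if_pos h1, WP]
          field_simp
      · simp [h1]
    calc ∑ a, ∑ t : T, WP Pt t * QP Pt t a b x a * RP t c z
        = ∑ t : T, ∑ a, WP Pt t * QP Pt t a b x a * RP t c z := Finset.sum_comm
      _ = ∑ t : T, WP Pt t * (∑ a : Fin 2, QP Pt t a b x a) * RP t c z := by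
          refine Finset.sum_congr rfl fun t _ => ?_
          simp only [← Finset.sum_mul, ← Finset.mul_sum]
      _ = ∑ t : T, (if x = t.1 then JP Pt b t.2.1 t.2.2 t.1 else 0) * RP t c z :=
          Finset.sum_congr rfl fun t _ => key t
      _ = Pt b c x z := by
          rw [Fintype.sum_prod_type]
          rw [Fin.sum_univ_two]
          fin_cases x <;> fin_cases z <;>
            simp [RP, Fintype.sum_prod_type, Fin.sum_univ_two] <;>
            first
              | exact hsum_c1' b c _
              | exact hsum_c0' b c _
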